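/- Let X be a real Banach space and T : X ⇉ X* a monotone operator with the regularity property, i.e. L(x, 0, T) < ∞ implies x ∈ D_T. Then π₁ dom φ_T ⊆ cl D_T; consequently cl D_T = cl(co D_T) = cl(π₁ dom φ_T) and cl D_T is convex. -/

import Mathlib

/-!
If `x ∈ π₁ dom φ_T` with witness `x*` and bound `M`, then every `(z, z*) ∈ G(T)` satisfies
`⟨z*, x - z⟩ ≤ M + ‖x*‖ ‖x - z‖`. If `x` were at distance `δ > 0` from `D_T`, dividing by
`‖x - z‖ ≥ δ` would make `L(x, 0, T)` finite, and the regularity property would put `x` in `D_T`.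
The remaining claims follow because monotonicity gives `D_T ⊆ π₁ dom φ_T` and `π₁ dom φ_T` is
convex, so `D_T ⊆ co D_T ⊆ π₁ dom φ_T ⊆ cl D_T`.
-/

open Set Bornology
open scoped Pointwise

noncomputable section

variable {X : Type*} [NormedAddCommGroup X] [NormedSpace ℝ X]

/-- The topological dual of `X`. -/
abbrev DualX (X : Type*) [NormedAddCommGroup X] [NormedSpace ℝ X] := X →L[ℝ] ℝ

/-- Domain of a set-valued operator `T : X ⇉ X*`. -/
def OpDom (T : X → Set (DualX X)) : Set X := {x | (T x).Nonempty}

/-- Range of a set-valued operator `T : X ⇉ X*`. -/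
def OpRan (T : X → Set (DualX X)) : Set (DualX X) := {p | ∃ x, p ∈ T x}

/-- `T` is a monotone operator. -/
def IsMonotoneOp (T : X → Set (DualX X)) : Prop :=
  ∀ ⦃x x' y y'⦄, x' ∈ T x → y' ∈ T y → 0 ≤ (x' - y') (x - y)

/-- `T` is a maximal monotone operator: it is monotone and no monotone operator has graph
strictly containing the graph of `T`. -/
def IsMaxMonotone (T : X → Set (DualX X)) : Prop :=
  IsMonotoneOp T ∧
    ∀ S : X → Set (DualX X), IsMonotoneOp S → (∀ x, T x ⊆ S x) → ∀ x, S x ⊆ T x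

/-- `L(x, x*, T) = sup {⟨y* − x*, x − y⟩/‖x − y‖ : (y,y*) ∈ G(T), y ≠ x}`, as a value
in `[-∞, ∞]` (the sup of the empty set being `-∞`). -/
def LVal (T : X → Set (DualX X)) (x : X) (x' : DualX X) : EReal :=
  sSup ((fun r : ℝ => (r : EReal)) ''
    {r | ∃ y y', y' ∈ T y ∧ y ≠ x ∧ r = (y' - x') (x - y) / ‖x - y‖})

/-- The distance from a point `x*` to a set `A ⊆ X*`, as a value in `[-∞,∞]`
(the inf of the empty set being `+∞`). -/
def DistE (x' : DualX X) (A : Set (DualX X)) : EReal :=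
  sInf ((fun y' : DualX X => (‖x' - y'‖ : EReal)) '' A)

/-- A maximal monotone operator is regular when `L(x,x*,T) = d(x*, T(x))` everywhere. -/
def IsRegularOp (T : X → Set (DualX X)) : Prop :=
  ∀ x : X, ∀ x' : DualX X, LVal T x x' = DistE x' (T x)

/-- The regularity property: `L(x, 0, T) < ∞` implies `x ∈ D_T`. -/
def RegularityProperty (T : X → Set (DualX X)) : Prop :=
  ∀ x : X, LVal T x 0 < ⊤ → x ∈ OpDom T

/-- `π₁ dom φ_T`: the projection onto `X` of the set where the Fitzpatrick function of `T`
is finite. -/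
def FitzDom1 (T : X → Set (DualX X)) : Set X :=
  {x | ∃ x' : DualX X, BddAbove {r : ℝ | ∃ z z', z' ∈ T z ∧ r = (x' - z') (z - x)}}

/-- `π₂ dom φ_T`: the projection onto `X*` of the set where the Fitzpatrick function of `T`
is finite. -/
def FitzDom2 (T : X → Set (DualX X)) : Set (DualX X) :=
  {x' | ∃ x : X, BddAbove {r : ℝ | ∃ z z', z' ∈ T z ∧ r = (x' - z') (z - x)}}

/-- The sum of two set-valued operators. -/
def OpSum (T S : X → Set (DualX X)) : X → Set (DualX X) :=
  fun x => {u | ∃ t' ∈ T x, ∃ s' ∈ S x, u = t' + s'}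

/-- The convex subdifferential of a real-valued function. -/
def Subdiff (f : X → ℝ) (x : X) : Set (DualX X) :=
  {x' | ∀ y : X, f x + x' (y - x) ≤ f y}

/-- The subdifferential `∂I_C` of the indicator function of `C`. -/
def IndSubdiff (C : Set X) (x : X) : Set (DualX X) :=
  {x' | x ∈ C ∧ ∀ y ∈ C, x' (y - x) ≤ 0}

/-- A set-valued operator is bounded if it maps bounded sets to bounded sets. -/
def IsBoundedOp (T : X → Set (DualX X)) : Prop :=
  ∀ A : Set X, IsBounded A → IsBounded {p : DualX X | ∃ x ∈ A, p ∈ T x}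

/-- Maximal monotone operators of type (FPV). -/
def IsFPV (T : X → Set (DualX X)) : Prop :=
  IsMaxMonotone T ∧
    ∀ U : Set X, IsOpen U → Convex ℝ U → (U ∩ OpDom T).Nonempty →
      ∀ x : X, ∀ x' : DualX X, x ∈ U →
        (∀ z z', z' ∈ T z → z ∈ U → 0 ≤ (x' - z') (x - z)) → x' ∈ T x

/-- The class `𝒞₀(T)`. -/
def CZero (T : X → Set (DualX X)) : Set (Set X) :=
  {C | IsClosed C ∧ Convex ℝ C ∧ (OpDom T ∩ interior C).Nonempty}

/-- The class `𝒞₁(T)`. -/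
def COne (T : X → Set (DualX X)) : Set (Set X) :=
  {C | IsClosed C ∧ Convex ℝ C ∧
    ∃ Y : Submodule ℝ X, IsClosed (Y : Set X) ∧
      (Y : Set X) = ⋃ (l : ℝ) (_ : 0 < l), l • (convexHull ℝ (OpDom T) - C)}

/-- `T` is `𝒞₀`-maximal. -/
def CZeroMaximal (T : X → Set (DualX X)) : Prop :=
  ∀ C ∈ CZero T, IsMaxMonotone (OpSum T (IndSubdiff C))

/-- `T` is `𝒞₁`-maximal. -/
def COneMaximal (T : X → Set (DualX X)) : Prop :=
  ∀ C ∈ COne T, IsMaxMonotone (OpSum T (IndSubdiff C))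

/-- `K_{y,A} = {(1−t)y + ta : t ∈ [0,1], a ∈ A}`. -/
def Kseg (y : X) (A : Set X) : Set X :=
  {p | ∃ t ∈ Icc (0:ℝ) 1, ∃ a ∈ A, p = (1 - t) • y + t • a}

/-- `T` is directionally inf bounded at `x`. -/
def DirInfBdd (T : X → Set (DualX X)) (x : X) : Prop :=
  ∀ y : X, ∃ ε > (0:ℝ), ∃ M > (0:ℝ),
    ∀ z ∈ Kseg y (Metric.ball x ε) ∩ OpDom T, ∃ z' ∈ T z, z' (z - y) ≤ M * ‖z - y‖

/-- The weak*-closure of a subset of the dual. -/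
def WStarClosure (A : Set (DualX X)) : Set (DualX X) :=
  ⇑StrongDual.toWeakDual ⁻¹' closure (⇑StrongDual.toWeakDual '' A)

lemma LVal_le_coe {T : X → Set (DualX X)} {x : X} {x' : DualX X} {B : ℝ}
    (h : ∀ y y', y' ∈ T y → y ≠ x → (y' - x') (x - y) / ‖x - y‖ ≤ B) :
    LVal T x x' ≤ B := by
  refine sSup_le ?_
  rintro e ⟨r, ⟨y, y', hy, hne, rfl⟩, rfl⟩
  exact EReal.coe_le_coe_iff.mpr (h y y' hy hne)

lemma LVal_zero_lt_top_of_mem_FitzDom1 {T : X → Set (DualX X)} {x : X}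
    (hx : x ∈ FitzDom1 T) (hcl : x ∉ closure (OpDom T)) : LVal T x 0 < ⊤ := by
  obtain ⟨x', M, hM⟩ := hx
  obtain ⟨δ, hδ, hsep⟩ : ∃ δ > 0, ∀ z ∈ OpDom T, δ ≤ ‖x - z‖ := by
    simpa [Metric.mem_closure_iff, dist_eq_norm] using hcl
  set K := max M 0
  refine (LVal_le_coe (B := K / δ + ‖x'‖) fun z z' hz _ => ?_).trans_lt (EReal.coe_lt_top _)
  have hδz : δ ≤ ‖x - z‖ := hsep z ⟨z', hz⟩
  have hfitz : (x' - z') (z - x) ≤ K := (hM ⟨z, z', hz, rfl⟩).trans (le_max_left _ _)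
  have hpair : (z' - 0) (x - z) = (x' - z') (z - x) + x' (x - z) := by
    simp only [sub_zero, sub_apply, map_sub]
    ring
  rw [div_le_iff₀ (hδ.trans_le hδz)]
  calc (z' - 0) (x - z) = (x' - z') (z - x) + x' (x - z) := hpair
    _ ≤ K + ‖x'‖ * ‖x - z‖ := add_le_add hfitz ((le_abs_self _).trans (x'.le_opNorm _))
    _ = K / δ * δ + ‖x'‖ * ‖x - z‖ := by rw [div_mul_cancel₀ K hδ.ne']
    _ ≤ K / δ * ‖x - z‖ + ‖x'‖ * ‖x - z‖ := by gcongr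
    _ = (K / δ + ‖x'‖) * ‖x - z‖ := by ring

lemma FitzDom1_subset_closure_OpDom {T : X → Set (DualX X)} (hreg : RegularityProperty T) :
    FitzDom1 T ⊆ closure (OpDom T) := fun x hx => by
  by_contra hcl
  exact hcl (subset_closure (hreg x (LVal_zero_lt_top_of_mem_FitzDom1 hx hcl)))

lemma OpDom_subset_FitzDom1 {T : X → Set (DualX X)} (hmono : IsMonotoneOp T) :
    OpDom T ⊆ FitzDom1 T := by
  rintro x ⟨x', hx'⟩
  refine ⟨x', 0, ?_⟩
  rintro r ⟨z, z', hz, rfl⟩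
  have hneg : (x' - z') (z - x) = -((x' - z') (x - z)) := by
    rw [← map_neg, neg_sub]
  linarith [hmono hx' hz]

lemma convex_FitzDom1 (T : X → Set (DualX X)) : Convex ℝ (FitzDom1 T) := by
  rintro x₁ ⟨x₁', M₁, hM₁⟩ x₂ ⟨x₂', M₂, hM₂⟩ a b ha hb hab
  obtain rfl : b = 1 - a := by linarith
  refine ⟨a • x₁' + (1 - a) • x₂',
    a * M₁ + (1 - a) * M₂ + a * (1 - a) * (x₁' - x₂') (x₁ - x₂), ?_⟩
  rintro r ⟨z, z', hz, rfl⟩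
  -- the pairing is bilinear, so its defect from affinity along the segment is this cross term
  have hsplit : ((a • x₁' + (1 - a) • x₂') - z') (z - (a • x₁ + (1 - a) • x₂)) =
      a * (x₁' - z') (z - x₁) + (1 - a) * (x₂' - z') (z - x₂) +
        a * (1 - a) * (x₁' - x₂') (x₁ - x₂) := by
    simp only [sub_apply, add_apply,
      FunLike.coe_smul, Pi.smul_apply, map_sub, map_add, map_smul, smul_eq_mul]
    ring
  rw [hsplit]
  gcongr
  · exact hM₁ ⟨z, z', hz, rfl⟩
  · exact hM₂ ⟨z, z', hz, rfl⟩

theorem statement6_general {X : Type*} [NormedAddCommGroup X] [NormedSpace ℝ X]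
    (T : X → Set (DualX X)) (hmono : IsMonotoneOp T)
    (hreg : RegularityProperty T) :
    FitzDom1 T ⊆ closure (OpDom T) ∧
      closure (OpDom T) = closure (convexHull ℝ (OpDom T)) ∧
      closure (OpDom T) = closure (FitzDom1 T) ∧
      Convex ℝ (closure (OpDom T)) := by
  have hFitz := FitzDom1_subset_closure_OpDom hreg
  have hDom := OpDom_subset_FitzDom1 hmono
  have hHull : convexHull ℝ (OpDom T) ⊆ FitzDom1 T := convexHull_min hDom (convex_FitzDom1 T)
  have hEqHull : closure (OpDom T) = closure (convexHull ℝ (OpDom T)) :=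
    (closure_mono (subset_convexHull ℝ _)).antisymm
      (closure_minimal (hHull.trans hFitz) isClosed_closure)
  refine ⟨hFitz, hEqHull, (closure_mono hDom).antisymm (closure_minimal hFitz isClosed_closure), ?_⟩
  rw [hEqHull]
  exact (convex_convexHull ℝ _).closure

/-- A monotone operator with the regularity property satisfies
`π₁ dom φ_T ⊆ cl D_T`; consequently `cl D_T = cl co D_T = cl π₁ dom φ_T` and
`cl D_T` is convex. -/
theorem statement6 {X : Type*} [NormedAddCommGroup X] [NormedSpace ℝ X] [CompleteSpace X]
    (T : X → Set (DualX X)) (hmono : IsMonotoneOp T)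
    (hreg : RegularityProperty T) :
    FitzDom1 T ⊆ closure (OpDom T) ∧
      closure (OpDom T) = closure (convexHull ℝ (OpDom T)) ∧
      closure (OpDom T) = closure (FitzDom1 T) ∧
      Convex ℝ (closure (OpDom T)) :=
  statement6_general T hmono hreg
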